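/- Let G be a semigroup, let θ ∈ G, and let R ⊆ G with θ ∉ R, such that the multiplication of G is given by: x*y = y whenever x ∈ R, and x*y = θ whenever x ∉ R. (For |G \ R| = m ≥ 1 and |R| = n this is the semigroup ORO_{m,n}, the ideal extension of the null semigroup O_m by the right-null semigroup RO_n with zero adjoined.) Then a partition 𝒮 of G into nonempty finite blocks is a Schur ring over G if and only if {θ} is a block of 𝒮. -/

import Mathlib

open scoped Pointwise

/-- The simple quantity `[X] = ∑_{x ∈ X} x` in the semigroup algebra `MonoidAlgebra ℚ G`. -/
noncomputable def simpleQty {G : Type*} [Mul G] (X : Finset G) : MonoidAlgebra ℚ G :=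
  ∑ x ∈ X, MonoidAlgebra.single x (1 : ℚ)

/-- A partition of `G` into nonempty finite blocks. -/
def IsPartition {G : Type*} (S : Set (Set G)) : Prop :=
  (∀ X ∈ S, X.Nonempty ∧ X.Finite) ∧ ∀ x : G, ∃! X, X ∈ S ∧ x ∈ X

/-- The ℚ-linear span of the simple quantities of the blocks of `S`. -/
noncomputable def schurSpan {G : Type*} [Mul G] (S : Set (Set G)) :
    Submodule ℚ (MonoidAlgebra ℚ G) :=
  Submodule.span ℚ { z | ∃ X ∈ S, ∃ hX : X.Finite, z = simpleQty hX.toFinset }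

/-- A Schur ring over the semigroup `G`. -/
def IsSchurRing {G : Type*} [Semigroup G] (S : Set (Set G)) : Prop :=
  IsPartition S ∧ ∀ X ∈ S, ∀ Y ∈ S, ∀ (hX : X.Finite) (hY : Y.Finite),
    simpleQty hX.toFinset * simpleQty hY.toFinset ∈ schurSpan S

/-- `A` is an `S`-subset: a union of blocks of `S`. -/
def IsSUnion {G : Type*} (S : Set (Set G)) (A : Set G) : Prop :=
  ∀ X ∈ S, X ⊆ A ∨ X ∩ A = ∅

lemma ma_add_apply {G : Type*} [Mul G] (f g : MonoidAlgebra ℚ G) (x : G) :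
    (f + g).coeff x = f.coeff x + g.coeff x := rfl

lemma ma_qsmul_apply {G : Type*} [Mul G] (c : ℚ) (f : MonoidAlgebra ℚ G) (x : G) :
    (c • f).coeff x = c * f.coeff x := rfl

lemma ma_nsmul_apply {G : Type*} [Mul G] (n : ℕ) (f : MonoidAlgebra ℚ G) (x : G) :
    (n • f).coeff x = n * f.coeff x := by
  induction n with
  | zero => simp
  | succ k ih =>
    rw [succ_nsmul]
    show (k • f).coeff x + f.coeff x = _
    rw [ih]; push_cast; ring

open Classical in
lemma simpleQty_apply {G : Type*} [Mul G] (F : Finset G) (g : G) :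
    (simpleQty F).coeff g = if g ∈ F then (1:ℚ) else 0 := by
  rw [simpleQty, MonoidAlgebra.coeff_sum, Finsupp.finset_sum_apply]
  simp [MonoidAlgebra.coeff_single, Finsupp.single_apply]

open Classical in
lemma oro_mul_formula {G : Type*} [Semigroup G] (θ : G) (R : Set G)
    (hmul1 : ∀ x ∈ R, ∀ y : G, x * y = y)
    (hmul2 : ∀ x : G, x ∉ R → ∀ y : G, x * y = θ)
    (X Y : Finset G) :
    simpleQty X * simpleQty Y =
      (X.filter (· ∈ R)).card • simpleQty Y +
      ((X.filter (· ∉ R)).card * Y.card) • MonoidAlgebra.single θ (1:ℚ) := by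
  rw [simpleQty, simpleQty, Finset.sum_mul_sum]
  have : ∀ x ∈ X, ∑ y ∈ Y, MonoidAlgebra.single x (1:ℚ) * MonoidAlgebra.single y 1 =
      if x ∈ R then simpleQty Y else Y.card • MonoidAlgebra.single θ (1:ℚ) := by
    intro x _
    by_cases hx : x ∈ R
    · simp only [hx, if_true, MonoidAlgebra.single_mul_single, one_mul, simpleQty]
      exact Finset.sum_congr rfl fun y _ => by rw [hmul1 x hx y]
    · simp only [hx, if_false, MonoidAlgebra.single_mul_single, one_mul]
      rw [Finset.sum_congr rfl fun y _ => by rw [hmul2 x hx y]]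
      simp [Finset.sum_const]
  rw [Finset.sum_congr rfl this, Finset.sum_ite]
  simp [Finset.sum_const, Finset.filter_not, smul_smul, simpleQty]

lemma span_const {G : Type*} [Mul G] (S : Set (Set G)) (hS : IsPartition S)
    {z : MonoidAlgebra ℚ G} (hz : z ∈ schurSpan S)
    {X : Set G} (hXS : X ∈ S) {g g' : G} (hg : g ∈ X) (hg' : g' ∈ X) :
    z.coeff g = z.coeff g' := by
  induction hz using Submodule.span_induction with
  | mem w hw =>
    obtain ⟨C, hCS, hC, rfl⟩ := hw
    rw [simpleQty_apply, simpleQty_apply]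
    have : g ∈ C ↔ g' ∈ C := by
      constructor
      · intro h
        have h1 := (hS.2 g).unique ⟨hXS, hg⟩ ⟨hCS, h⟩
        exact h1 ▸ hg'
      · intro h
        have h1 := (hS.2 g').unique ⟨hXS, hg'⟩ ⟨hCS, h⟩
        exact h1 ▸ hg
    by_cases h : g ∈ C
    · rw [if_pos (hC.mem_toFinset.mpr h), if_pos (hC.mem_toFinset.mpr (this.mp h))]
    · rw [if_neg (fun hh => h (hC.mem_toFinset.mp hh)),
        if_neg (fun hh => h (this.mpr (hC.mem_toFinset.mp hh)))]
  | zero => rfl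
  | add a b _ _ ha hb => rw [ma_add_apply, ma_add_apply, ha, hb]
  | smul c a _ ha => rw [ma_qsmul_apply, ma_qsmul_apply, ha]

/-- over `ORO_{m,n}` (elements of `R` are left identities, all other
elements are left zeros sending everything to `θ`), a partition is a Schur ring iff
`{θ}` is a block. -/
theorem oro_schur {G : Type*} [Semigroup G] (θ : G) (R : Set G) (hθR : θ ∉ R)
    (hmul1 : ∀ x ∈ R, ∀ y : G, x * y = y)
    (hmul2 : ∀ x : G, x ∉ R → ∀ y : G, x * y = θ)
    (S : Set (Set G)) (hS : IsPartition S) :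
    IsSchurRing S ↔ ({θ} : Set G) ∈ S := by
  classical
  constructor
  · intro hSch
    obtain ⟨X, ⟨hXS, hθX⟩, -⟩ := hS.2 θ
    have hX : X.Finite := (hS.1 X hXS).2
    have hXeq : X = {θ} := by
      refine Set.eq_singleton_iff_unique_mem.mpr ⟨hθX, fun g hg => ?_⟩
      by_contra hne
      have hz := hSch.2 X hXS X hXS hX hX
      have hconst := span_const S hS hz hXS hθX hg
      rw [oro_mul_formula θ R hmul1 hmul2] at hconst
      have hθF : θ ∈ hX.toFinset := hX.mem_toFinset.mpr hθX
      have hgF : g ∈ hX.toFinset := hX.mem_toFinset.mpr hg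
      have hb : θ ∈ hX.toFinset.filter (· ∉ R) := Finset.mem_filter.mpr ⟨hθF, hθR⟩
      set a := (hX.toFinset.filter (· ∈ R)).card
      set b := (hX.toFinset.filter (· ∉ R)).card
      have h1 : ((a • simpleQty hX.toFinset +
          (b * hX.toFinset.card) • MonoidAlgebra.single θ (1:ℚ)) : MonoidAlgebra ℚ G).coeff θ
          = a + (b * hX.toFinset.card) := by
        rw [ma_add_apply, ma_nsmul_apply, ma_nsmul_apply, simpleQty_apply]
        simp [hθF, MonoidAlgebra.coeff_single, Finsupp.single_apply]
      have h2 : ((a • simpleQty hX.toFinset +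
          (b * hX.toFinset.card) • MonoidAlgebra.single θ (1:ℚ)) : MonoidAlgebra ℚ G).coeff g
          = a := by
        rw [ma_add_apply, ma_nsmul_apply, ma_nsmul_apply, simpleQty_apply]
        simp [hgF, MonoidAlgebra.coeff_single, Finsupp.single_apply, Ne.symm hne]
      rw [h1, h2] at hconst
      have hb1 : 0 < b := Finset.card_pos.mpr ⟨θ, hb⟩
      have hc1 : 0 < hX.toFinset.card := Finset.card_pos.mpr ⟨θ, hθF⟩
      have hb2 : (0:ℚ) < b := by exact_mod_cast hb1
      have hc2 : (0:ℚ) < hX.toFinset.card := by exact_mod_cast hc1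
      nlinarith
    exact hXeq ▸ hXS
  · intro hθS
    refine ⟨hS, fun X hXS Y hYS hX hY => ?_⟩
    rw [oro_mul_formula θ R hmul1 hmul2]
    refine add_mem (nsmul_mem (Submodule.subset_span ?_) _)
      (nsmul_mem (Submodule.subset_span ?_) _)
    · exact ⟨Y, hYS, hY, rfl⟩
    · exact ⟨{θ}, hθS, Set.finite_singleton θ, by simp [simpleQty]⟩
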